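/- Let k ≥ 1, let Ω be a real symmetric positive definite (k+1)×(k+1) matrix, let (M̄, Ȳ_0, …, Ȳ_k) be a KKT pair for (P) at Ω, and let Ω̄ be any real symmetric (k+1)×(k+1) matrix. Then there is at most one tuple of real symmetric (k+1)×(k+1) matrices (Ṁ, Ẏ_0, …, Ẏ_k) satisfying ∑_{i=0}^k Ẏ_i = Ω̄ and Ẏ_i (M̄ − C_i) = Ȳ_i Ṁ for every i = 0,…,k. (Uniqueness of the sensitivity linear system for the directional derivatives of the primal and dual solutions, asserted in Theorem 3 and Appendix C of the paper.) -/

import Mathlib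

/-!
Write `S_i = C_i - M̄ ⪰ 0`. Feasibility forces a vector of `ker S_i` with vanishing last
coordinate to be zero, so `ker S_i` is a line `ℝ u_i`. Since `Ȳ_i S_i = 0`, the range of `Ȳ_i`
lies on that line, so `Ȳ_i = μ_i u_i u_iᵀ`; as the `k + 1` matrices `Ȳ_i` add up to the invertible
`Ω`, the `u_i` form a basis and every `μ_i > 0`.

For the difference `(D, Z_i)` of two solutions, `S_i Z_i S_i = 0` forces
`Z_i = u_i v_iᵀ + v_i u_iᵀ` with `S_i v_i = μ_i D u_i`, whence `μ_i tr (Z_i D) = 2 v_iᵀ S_i v_i`,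
which is `≥ 0`. These traces add up to `tr ((∑ Z_i) D) = 0`, so `S_i v_i = 0` for all `i`. Hence
`D u_i = 0` for all `i`, i.e. `D = 0`, and `v_i ∈ ℝ u_i` turns `∑ Z_i = 0` into
`∑ u_i (2 v_i)ᵀ = 0`, so `Z_i = 0`.
-/

open Matrix MeasureTheory

/-- The constraint matrices `C_0 = 0` and
`C_i = [[0, e_i/2], [e_iᵀ/2, -ylow]]` for `i = 1,…,k` of the primal SDP (P). -/
noncomputable def Cmat (k : ℕ) (ylow : ℝ) : Fin (k + 1) → Matrix (Fin (k + 1)) (Fin (k + 1)) ℝ :=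
  Fin.cases 0 fun i : Fin k =>
    Matrix.of fun a b =>
      if a = Fin.last k ∧ b = Fin.last k then -ylow
      else if a = i.castSucc ∧ b = Fin.last k then 1 / 2
      else if a = Fin.last k ∧ b = i.castSucc then 1 / 2
      else 0

/-- A symmetric matrix `M` is feasible for (P) if `M - C_i ⪯ 0` for `i = 0,…,k`. -/
def PFeasible (k : ℕ) (ylow : ℝ) (M : Matrix (Fin (k + 1)) (Fin (k + 1)) ℝ) : Prop :=
  M.IsSymm ∧ ∀ i : Fin (k + 1), (Cmat k ylow i - M).PosSemidef


/-- A KKT pair for (P) at `Ω`: a feasible `M̄` together with positive semidefinite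
multipliers `Ȳ_0, …, Ȳ_k` with `∑ Ȳ_i = Ω` and `Ȳ_i (M̄ - C_i) = 0` for all `i`. -/
def KKTpair (k : ℕ) (ylow : ℝ) (Ω M : Matrix (Fin (k + 1)) (Fin (k + 1)) ℝ)
    (Y : Fin (k + 1) → Matrix (Fin (k + 1)) (Fin (k + 1)) ℝ) : Prop :=
  PFeasible k ylow M ∧ (∀ i, (Y i).PosSemidef) ∧ (∑ i, Y i) = Ω ∧
    ∀ i, Y i * (M - Cmat k ylow i) = 0

namespace Matrix

variable {ι n K : Type*} [Field K]

theorem IsSymm.exists_eq_smul_vecMulVec [Fintype n] [DecidableEq n] {Y : Matrix n n K}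
    (hY : Y.IsSymm) {u : n → K} (hrange : ∀ x, Y *ᵥ x ∈ K ∙ u) :
    ∃ μ : K, Y = μ • vecMulVec u u := by
  rcases eq_or_ne u 0 with rfl | hu
  · refine ⟨0, ext_of_mulVec_single fun b => ?_⟩
    rw [zero_smul, zero_mulVec]
    simpa using hrange (Pi.single b 1)
  obtain ⟨i, hi⟩ : ∃ i, u i ≠ 0 := Function.ne_iff.mp hu
  choose c hc using fun b => Submodule.mem_span_singleton.mp (hrange (Pi.single b 1))
  have hentry : ∀ a b, Y a b = c b * u a := fun a b => by
    simpa [mulVec_single_one] using (congrFun (hc b) a).symm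
  have hsymm : ∀ b, c b * u i = c i * u b := fun b => by
    rw [← hentry, ← hentry, hY.apply]
  refine ⟨c i / u i, Matrix.ext fun a b => ?_⟩
  rw [hentry, smul_apply, vecMulVec_apply, smul_eq_mul]
  field_simp
  linear_combination u a * hsymm b

theorem linearIndependent_of_isUnit_sum_vecMulVec [Fintype ι] [Fintype n] [DecidableEq n]
    {w u : ι → n → K} (h : IsUnit (∑ j, vecMulVec (w j) (u j)))
    (hcard : Fintype.card ι = Fintype.card n) :
    LinearIndependent K w := by
  refine linearIndependent_of_top_le_span_of_card_eq_finrank (fun x _ => ?_)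
    (by simpa using hcard)
  obtain ⟨y, rfl⟩ := mulVec_surjective_iff_isUnit.mpr h x
  rw [sum_mulVec]
  refine Submodule.sum_mem _ fun j _ => ?_
  rw [vecMulVec_mulVec, op_smul_eq_smul]
  exact Submodule.smul_mem _ _ (Submodule.subset_span ⟨j, rfl⟩)

theorem _root_.LinearIndependent.eq_zero_of_sum_vecMulVec_eq_zero [Fintype ι] {u x : ι → n → K}
    (hu : LinearIndependent K u) (h : ∑ j, vecMulVec (u j) (x j) = 0) (j : ι) : x j = 0 := by
  funext b
  refine Fintype.linearIndependent_iff.mp hu (fun j => x j b) ?_ j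
  funext a
  simpa [Matrix.sum_apply, vecMulVec_apply, mul_comm] using congrFun (congrFun h a) b

theorem trace_vecMulVec_add_vecMulVec_mul [Fintype n] {D : Matrix n n K} (hD : D.IsSymm)
    (u v : n → K) :
    trace ((vecMulVec u v + vecMulVec v u) * D) = 2 * (v ⬝ᵥ D *ᵥ u) := by
  rw [add_mul, vecMulVec_mul, vecMulVec_mul, trace_add, trace_vecMulVec, trace_vecMulVec,
    dotProduct_comm, ← dotProduct_mulVec, ← mulVec_transpose, hD.eq]
  ring

theorem PosSemidef.isSymm {A : Matrix n n ℝ} (hA : A.PosSemidef) : A.IsSymm :=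
  isHermitian_iff_isSymm.mp hA.isHermitian

section Real

variable [Fintype n] {A W Z : Matrix n n ℝ} {u : n → ℝ}

theorem eq_zero_of_mulVec_eq_zero_of_dotProduct_eq_zero
    (hker : LinearMap.ker A.mulVecLin ≤ ℝ ∙ u) {w : n → ℝ} (hw : A *ᵥ w = 0)
    (huw : u ⬝ᵥ w = 0) : w = 0 := by
  obtain ⟨t, rfl⟩ := Submodule.mem_span_singleton.mp (hker hw)
  rw [dotProduct_smul, smul_eq_mul, mul_eq_zero, dotProduct_self_eq_zero] at huw
  rcases huw with rfl | rfl <;> simp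

theorem IsSymm.eq_zero_of_mul_mul_eq_zero [DecidableEq n] (hA : A.IsSymm)
    (hker : LinearMap.ker A.mulVecLin ≤ ℝ ∙ u) (hW : W.IsSymm) (hWu : W *ᵥ u = 0)
    (hAWA : A * W * A = 0) : W = 0 := by
  have key : ∀ {B : Matrix n n ℝ}, A * (W * B) = 0 → W * B = 0 := fun hB =>
    ext_of_mulVec_single fun b => by
      rw [zero_mulVec]
      refine eq_zero_of_mulVec_eq_zero_of_dotProduct_eq_zero hker ?_ ?_
      · rw [mulVec_mulVec, hB, zero_mulVec]
      · rw [← mulVec_mulVec, dotProduct_mulVec, ← mulVec_transpose, hW.eq, hWu,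
          zero_dotProduct]
  have hWA : W * A = 0 := key (by rw [← mul_assoc, hAWA])
  have hAW : A * W = 0 := by simpa [hA.eq, hW.eq] using congrArg Matrix.transpose hWA
  simpa using key (B := 1) (by rw [mul_one, hAW])

theorem IsSymm.exists_eq_vecMulVec_add_vecMulVec [DecidableEq n] (hA : A.IsSymm)
    (hker : LinearMap.ker A.mulVecLin ≤ ℝ ∙ u) (hAu : A *ᵥ u = 0) (hZ : Z.IsSymm)
    (hAZA : A * Z * A = 0) : ∃ v, Z = vecMulVec u v + vecMulVec v u := by
  rcases eq_or_ne u 0 with rfl | hu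
  · exact ⟨0, by simpa using hA.eq_zero_of_mul_mul_eq_zero hker hZ (mulVec_zero Z) hAZA⟩
  have hs : u ⬝ᵥ u ≠ 0 := dotProduct_self_eq_zero.not.mpr hu
  set p := Z *ᵥ u
  -- `v` is chosen so that `Z - (u vᵀ + v uᵀ)` kills `u`
  set v := (u ⬝ᵥ u)⁻¹ • p - ((u ⬝ᵥ p) / (2 * (u ⬝ᵥ u) ^ 2)) • u
  refine ⟨v, sub_eq_zero.mp (hA.eq_zero_of_mul_mul_eq_zero hker ?_ ?_ ?_)⟩
  · exact hZ.sub (show (vecMulVec u v + vecMulVec v u).IsSymm by simp [IsSymm, add_comm])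
  · rw [sub_mulVec, add_mulVec, vecMulVec_mulVec, vecMulVec_mulVec, op_smul_eq_smul,
      op_smul_eq_smul]
    have hvu : v ⬝ᵥ u = (u ⬝ᵥ p) / (2 * (u ⬝ᵥ u)) := by
      simp only [v, sub_dotProduct, smul_dotProduct, smul_eq_mul, dotProduct_comm p u]
      field_simp
      ring
    rw [hvu]
    simp only [v, smul_sub, smul_smul]
    match_scalars <;> field_simp <;> ring
  · have huA : u ᵥ* A = 0 := by rw [← mulVec_transpose, hA.eq, hAu]
    simp [mul_sub, sub_mul, mul_add, mul_vecMulVec, vecMulVec_mul, hAu, huA, hAZA]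

theorem IsSymm.exists_eq_vecMulVec_add_vecMulVec_of_mul_eq_vecMulVec [DecidableEq n]
    (hA : A.IsSymm) (hker : LinearMap.ker A.mulVecLin = ℝ ∙ u) (hu : u ≠ 0) (hZ : Z.IsSymm)
    {w : n → ℝ} (hZA : Z * A = vecMulVec u w) :
    ∃ v, Z = vecMulVec u v + vecMulVec v u ∧ A *ᵥ v = w := by
  have hAu : A *ᵥ u = 0 := LinearMap.mem_ker.mp (hker ▸ Submodule.mem_span_singleton_self u)
  have hAZA : A * Z * A = 0 := by rw [mul_assoc, hZA, mul_vecMulVec, hAu, zero_vecMulVec]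
  obtain ⟨v, rfl⟩ := hA.exists_eq_vecMulVec_add_vecMulVec hker.le hAu hZ hAZA
  refine ⟨v, rfl, ?_⟩
  rw [add_mul, vecMulVec_mul, vecMulVec_mul, ← mulVec_transpose, ← mulVec_transpose, hA.eq, hAu,
    vecMulVec_zero, add_zero] at hZA
  rw [← sub_eq_zero, ← vecMulVec_sub, vecMulVec_eq_zero] at hZA
  exact sub_eq_zero.mp (hZA.resolve_left hu)

theorem PosSemidef.nonneg_of_eq_smul_vecMulVec {μ : ℝ} (hY : (μ • vecMulVec u u).PosSemidef)
    (hu : u ≠ 0) : 0 ≤ μ := by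
  have hs : u ⬝ᵥ u ≠ 0 := dotProduct_self_eq_zero.not.mpr hu
  have := hY.dotProduct_mulVec_nonneg u
  simp only [star_trivial, smul_mulVec, vecMulVec_mulVec, op_smul_eq_smul, dotProduct_smul,
    smul_eq_mul] at this
  exact nonneg_of_mul_nonneg_left this (mul_self_pos.mpr hs)

end Real

end Matrix

section Sensitivity

variable {ι n : Type*} [Fintype ι] [Fintype n] [DecidableEq n]

/-- `(D, Z)` is the difference of two solutions of the sensitivity system with slacks `S` and
multipliers `Y`. -/
def SolvesHomogeneousSensitivity (S Y : ι → Matrix n n ℝ) (D : Matrix n n ℝ)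
    (Z : ι → Matrix n n ℝ) : Prop :=
  D.IsSymm ∧ (∀ j, (Z j).IsSymm) ∧ ∑ j, Z j = 0 ∧ ∀ j, Z j * S j = Y j * D

variable {S Y : ι → Matrix n n ℝ} {D : Matrix n n ℝ} {Z : ι → Matrix n n ℝ}

theorem SolvesHomogeneousSensitivity.eq_zero_of_eq_smul_vecMulVec
    (h : SolvesHomogeneousSensitivity S Y D Z) (u : Module.Basis ι ℝ (n → ℝ))
    (hS : ∀ j, (S j).PosSemidef) (hker : ∀ j, LinearMap.ker (S j).mulVecLin = ℝ ∙ u j)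
    {μ : ι → ℝ} (hμ : ∀ j, 0 < μ j) (hY : ∀ j, Y j = μ j • vecMulVec (u j) (u j)) :
    D = 0 ∧ ∀ j, Z j = 0 := by
  obtain ⟨hD, hZ, hZsum, hZS⟩ := h
  choose v hZv hSv using fun j =>
    (hS j).isSymm.exists_eq_vecMulVec_add_vecMulVec_of_mul_eq_vecMulVec (hker j) (u.ne_zero j)
      (hZ j) (w := μ j • D *ᵥ u j)
      (by rw [hZS, hY, smul_mul, vecMulVec_mul, ← mulVec_transpose, hD.eq, vecMulVec_smul])
  have htrace : ∀ j, μ j * trace (Z j * D) = 2 * (v j ⬝ᵥ S j *ᵥ v j) := fun j => by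
    rw [hZv j, trace_vecMulVec_add_vecMulVec_mul hD, hSv j, dotProduct_smul, smul_eq_mul]
    ring
  have htrace_nonneg : ∀ j, 0 ≤ trace (Z j * D) := fun j => by
    refine (mul_nonneg_iff_of_pos_left (hμ j)).mp ?_
    rw [htrace j]
    simpa using mul_nonneg zero_le_two ((hS j).dotProduct_mulVec_nonneg (v j))
  have htrace_sum : ∑ j, trace (Z j * D) = 0 := by
    rw [← trace_sum, ← Finset.sum_mul, hZsum, zero_mul, trace_zero]
  have hSv0 : ∀ j, S j *ᵥ v j = 0 := fun j => by
    have h0 := (Finset.sum_eq_zero_iff_of_nonneg fun j _ => htrace_nonneg j).mp htrace_sum j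
      (Finset.mem_univ j)
    have hq := htrace j
    rw [h0, mul_zero] at hq
    rw [← (hS j).dotProduct_mulVec_zero_iff, star_trivial]
    linarith
  have hDu : ∀ j, D *ᵥ u j = 0 := fun j => by
    simpa [hSv0, (hμ j).ne'] using (hSv j).symm
  have hD0 : D = 0 := by
    have hDlin : D.mulVecLin = 0 := u.ext hDu
    refine ext_of_mulVec_single fun b => ?_
    rw [zero_mulVec]
    simpa using LinearMap.congr_fun hDlin (Pi.single b 1)
  have hZu : ∀ j, Z j = vecMulVec (u j) (v j + v j) := fun j => by
    obtain ⟨t, ht⟩ := Submodule.mem_span_singleton.mp (hker j ▸ hSv0 j : v j ∈ ℝ ∙ u j)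
    rw [hZv j, vecMulVec_add, ← ht, smul_vecMulVec, vecMulVec_smul]
  have hvv := u.linearIndependent.eq_zero_of_sum_vecMulVec_eq_zero (x := fun j => v j + v j)
    (by simpa only [hZu] using hZsum)
  exact ⟨hD0, fun j => by rw [hZu j, hvv j, vecMulVec_zero]⟩

theorem SolvesHomogeneousSensitivity.eq_zero (h : SolvesHomogeneousSensitivity S Y D Z)
    (hcard : Fintype.card ι = Fintype.card n) (hS : ∀ j, (S j).PosSemidef)
    (hker : ∀ j, (LinearMap.ker (S j).mulVecLin).IsPrincipal) (hY : ∀ j, (Y j).PosSemidef)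
    (hYS : ∀ j, Y j * S j = 0) (hΩ : (∑ j, Y j).PosDef) :
    D = 0 ∧ ∀ j, Z j = 0 := by
  choose u hkeru using fun j => (hker j).principal
  have hrange : ∀ j x, Y j *ᵥ x ∈ ℝ ∙ u j := fun j x => by
    have hSY : S j * Y j = 0 := by
      simpa [(hS j).isSymm.eq, (hY j).isSymm.eq] using congrArg transpose (hYS j)
    rw [← hkeru j, LinearMap.mem_ker, mulVecLin_apply, mulVec_mulVec, hSY, zero_mulVec]
  choose μ hμ using fun j => (hY j).isSymm.exists_eq_smul_vecMulVec (hrange j)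
  have hunit : IsUnit (∑ j, μ j • vecMulVec (u j) (u j)) := by
    simpa only [← hμ] using hΩ.isUnit
  have hμu : LinearIndependent ℝ fun j => μ j • u j :=
    linearIndependent_of_isUnit_sum_vecMulVec (by simpa only [smul_vecMulVec] using hunit) hcard
  have hu : LinearIndependent ℝ u :=
    linearIndependent_of_isUnit_sum_vecMulVec (u := fun j => μ j • u j)
      (by simpa only [vecMulVec_smul] using hunit) hcard
  have hμpos : ∀ j, 0 < μ j := fun j =>
    ((hμ j ▸ hY j).nonneg_of_eq_smul_vecMulVec (hu.ne_zero j)).lt_of_ne'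
      (left_ne_zero_of_smul (hμu.ne_zero j))
  let b := basisOfLinearIndependentOfCardEqFinrank' u hu (by simpa using hcard)
  exact h.eq_zero_of_eq_smul_vecMulVec b hS (by simpa [b] using hkeru) hμpos
    (by simpa [b] using hμ)

end Sensitivity

theorem Submodule.isPrincipal_of_forall_apply_eq_zero {K n : Type*} [Field K] [Fintype n]
    (W : Submodule K (n → K)) (i : n) (h : ∀ w ∈ W, w i = 0 → w = 0) : W.IsPrincipal := by
  rw [← Submodule.finrank_le_one_iff_isPrincipal]
  have hinj : Function.Injective ((LinearMap.proj i : (n → K) →ₗ[K] K) ∘ₗ W.subtype) := by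
    rw [← LinearMap.ker_eq_bot, Submodule.eq_bot_iff]
    rintro ⟨w, hw⟩ hwi
    simpa using h w hw hwi
  simpa using LinearMap.finrank_le_finrank_of_injective hinj

section SDP

variable {k : ℕ} {ylow : ℝ}

theorem Cmat_zero : Cmat k ylow 0 = 0 := rfl

theorem Cmat_succ_mulVec_of_last_eq_zero (i : Fin k) {w : Fin (k + 1) → ℝ}
    (hw : w (Fin.last k) = 0) :
    Cmat k ylow i.succ *ᵥ w = Pi.single (Fin.last k) (w i.castSucc / 2) := by
  have hne : i.castSucc ≠ Fin.last k := (Fin.castSucc_lt_last i).ne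
  funext a
  by_cases ha : a = Fin.last k
  · subst ha
    simp only [Cmat, Fin.cases_succ, mulVec, dotProduct, of_apply, Pi.single_eq_same]
    rw [Finset.sum_eq_single i.castSucc]
    · simp [hne]
      ring
    · intro b _ hb
      by_cases hbl : b = Fin.last k <;> simp [hbl, hb, hw]
    · simp
  · simp [Cmat, mulVec, dotProduct, ha, hw, ite_and]

theorem PFeasible.eq_zero_of_mulVec_eq_zero {M : Matrix (Fin (k + 1)) (Fin (k + 1)) ℝ}
    (hM : PFeasible k ylow M) {j : Fin (k + 1)} {w : Fin (k + 1) → ℝ}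
    (hw : (Cmat k ylow j - M) *ᵥ w = 0) (hlast : w (Fin.last k) = 0) : w = 0 := by
  have hCw : ∀ i, w ⬝ᵥ Cmat k ylow i *ᵥ w = 0 := Fin.cases (by simp [Cmat_zero]) fun i => by
    rw [Cmat_succ_mulVec_of_last_eq_zero i hlast, dotProduct_single, hlast, zero_mul]
  have hMw : M *ᵥ w = Cmat k ylow j *ᵥ w := by
    rwa [sub_mulVec, sub_eq_zero, eq_comm] at hw
  have hker : ∀ i, (Cmat k ylow i - M) *ᵥ w = 0 := fun i => by
    rw [← (hM.2 i).dotProduct_mulVec_zero_iff, star_trivial, sub_mulVec, dotProduct_sub, hMw,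
      hCw, hCw, sub_zero]
  have hM0 : M *ᵥ w = 0 := by simpa [Cmat_zero, neg_mulVec] using hker 0
  funext a
  induction a using Fin.lastCases with
  | last => exact hlast
  | cast i =>
    have hi := congrFun (hker i.succ) (Fin.last k)
    rw [sub_mulVec, hM0, sub_zero, Cmat_succ_mulVec_of_last_eq_zero i hlast] at hi
    simpa using hi

theorem PFeasible.isPrincipal_ker {M : Matrix (Fin (k + 1)) (Fin (k + 1)) ℝ}
    (hM : PFeasible k ylow M) (j : Fin (k + 1)) :
    (LinearMap.ker (Cmat k ylow j - M).mulVecLin).IsPrincipal :=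
  Submodule.isPrincipal_of_forall_apply_eq_zero _ (Fin.last k) fun _ hw =>
    hM.eq_zero_of_mulVec_eq_zero hw

end SDP

theorem sensitivity_system_unique_general (k : ℕ) (ylow : ℝ)
    (Ω : Matrix (Fin (k + 1)) (Fin (k + 1)) ℝ) (hΩ : Ω.PosDef)
    (M : Matrix (Fin (k + 1)) (Fin (k + 1)) ℝ)
    (Y : Fin (k + 1) → Matrix (Fin (k + 1)) (Fin (k + 1)) ℝ)
    (hKKT : KKTpair k ylow Ω M Y)
    (Ωb : Matrix (Fin (k + 1)) (Fin (k + 1)) ℝ)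
    (M₁ M₂ : Matrix (Fin (k + 1)) (Fin (k + 1)) ℝ)
    (Y₁ Y₂ : Fin (k + 1) → Matrix (Fin (k + 1)) (Fin (k + 1)) ℝ)
    (hM₁ : M₁.IsSymm) (hM₂ : M₂.IsSymm)
    (hY₁ : ∀ i, (Y₁ i).IsSymm) (hY₂ : ∀ i, (Y₂ i).IsSymm)
    (hsum₁ : (∑ i, Y₁ i) = Ωb) (hsum₂ : (∑ i, Y₂ i) = Ωb)
    (heq₁ : ∀ i, Y₁ i * (M - Cmat k ylow i) = Y i * M₁)
    (heq₂ : ∀ i, Y₂ i * (M - Cmat k ylow i) = Y i * M₂) :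
    M₁ = M₂ ∧ ∀ i, Y₁ i = Y₂ i := by
  obtain ⟨hM, hY, rfl, hYM⟩ := hKKT
  -- the slacks are `C_i - M̄ ⪰ 0`, hence the sign of `Y₂ - Y₁`
  have hsol : SolvesHomogeneousSensitivity (fun i => Cmat k ylow i - M) Y (M₁ - M₂)
      (fun i => Y₂ i - Y₁ i) := by
    refine ⟨hM₁.sub hM₂, fun i => (hY₂ i).sub (hY₁ i), ?_, fun i => ?_⟩
    · rw [Finset.sum_sub_distrib, hsum₁, hsum₂, sub_self]
    · calc (Y₂ i - Y₁ i) * (Cmat k ylow i - M)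
          = Y₁ i * (M - Cmat k ylow i) - Y₂ i * (M - Cmat k ylow i) := by noncomm_ring
        _ = Y i * (M₁ - M₂) := by rw [heq₁, heq₂, mul_sub]
  have hYS : ∀ i, Y i * (Cmat k ylow i - M) = 0 := fun i => by
    rw [← neg_sub, mul_neg, hYM, neg_zero]
  obtain ⟨hD, hZ⟩ := hsol.eq_zero rfl hM.2 hM.isPrincipal_ker hY hYS hΩ
  exact ⟨sub_eq_zero.mp hD, fun i => (sub_eq_zero.mp (hZ i)).symm⟩

/-- **Uniqueness of the sensitivity linear system** (Theorem 3 / Appendix C of the paper).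
Given a KKT pair `(M̄, Ȳ)` at a positive definite `Ω` and a symmetric direction `Ω̄`, there is
at most one tuple of symmetric matrices `(Ṁ, Ẏ_0, …, Ẏ_k)` with `∑ᵢ Ẏ_i = Ω̄` and
`Ẏ_i (M̄ - C_i) = Ȳ_i Ṁ` for all `i`. -/
theorem sensitivity_system_unique (k : ℕ) (hk : 1 ≤ k) (ylow : ℝ)
    (Ω : Matrix (Fin (k + 1)) (Fin (k + 1)) ℝ) (hΩ : Ω.PosDef)
    (M : Matrix (Fin (k + 1)) (Fin (k + 1)) ℝ)
    (Y : Fin (k + 1) → Matrix (Fin (k + 1)) (Fin (k + 1)) ℝ)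
    (hKKT : KKTpair k ylow Ω M Y)
    (Ωb : Matrix (Fin (k + 1)) (Fin (k + 1)) ℝ) (hΩb : Ωb.IsSymm)
    (M₁ M₂ : Matrix (Fin (k + 1)) (Fin (k + 1)) ℝ)
    (Y₁ Y₂ : Fin (k + 1) → Matrix (Fin (k + 1)) (Fin (k + 1)) ℝ)
    (hM₁ : M₁.IsSymm) (hM₂ : M₂.IsSymm)
    (hY₁ : ∀ i, (Y₁ i).IsSymm) (hY₂ : ∀ i, (Y₂ i).IsSymm)
    (hsum₁ : (∑ i, Y₁ i) = Ωb) (hsum₂ : (∑ i, Y₂ i) = Ωb)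
    (heq₁ : ∀ i, Y₁ i * (M - Cmat k ylow i) = Y i * M₁)
    (heq₂ : ∀ i, Y₂ i * (M - Cmat k ylow i) = Y i * M₂) :
    M₁ = M₂ ∧ ∀ i, Y₁ i = Y₂ i :=
  sensitivity_system_unique_general k ylow Ω hΩ M Y hKKT Ωb M₁ M₂ Y₁ Y₂ hM₁ hM₂ hY₁ hY₂ hsum₁ hsum₂
    heq₁ heq₂
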